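/- In an AL-monoid, the following are equivalent: (1) lattice betweenness coincides with metric betweenness ((a,b,c)L ⇔ (a,b,c)M); (2) metric betweenness has transitivity t₁; (3) a ≥ b∨c and a*b ≥ a*c imply b ≤ c; (4) (a,b,c)M and (a,c,b)M imply b = c. -/
import Mathlib


/-- An Autometrized lattice ordered monoid (AL-monoid). -/
class ALMonoid (A : Type*) extends Lattice A, AddCommMonoid A where
  amul : A → A → A
  add_le_add_left' : ∀ a b : A, a ≤ b → ∀ c : A, c + a ≤ c + b
  amul_core : ∀ a b : A, amul a (a ⊓ b) + b = a ⊔ b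
  add_contract : ∀ a x y : A, amul (a + x) (a + y) ≤ amul x y
  sup_contract : ∀ a x y : A, amul (a ⊔ x) (a ⊔ y) ≤ amul x y
  inf_contract : ∀ a x y : A, amul (a ⊓ x) (a ⊓ y) ≤ amul x y
  amul_contract : ∀ a x y : A, amul (amul a x) (amul a y) ≤ amul x y
  inf_amul_sup : ∀ a b : A, amul a (a ⊔ b) ⊓ amul b (a ⊔ b) = 0
  amul_nonneg : ∀ a b : A, 0 ≤ amul a b
  amul_eq_zero_iff : ∀ a b : A, amul a b = 0 ↔ a = b
  amul_comm : ∀ a b : A, amul a b = amul b a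
  amul_triangle : ∀ a b c : A, amul a b ≤ amul a c + amul c b

open ALMonoid

infixl:70 " ⋆ " => ALMonoid.amul

section ALM
variable {A : Type*} [ALMonoid A]

private lemma amul_self (a : A) : a ⋆ a = 0 := (amul_eq_zero_iff a a).2 rfl

private lemma add_le_left {x y : A} (h : x ≤ y) (c : A) : c + x ≤ c + y :=
  add_le_add_left' x y h c

private lemma add_le_right {x y : A} (h : x ≤ y) (c : A) : x + c ≤ y + c := by
  rw [add_comm x c, add_comm y c]; exact add_le_left h c

private lemma add_le_add4 {x y u v : A} (h1 : x ≤ y) (h2 : u ≤ v) : x + u ≤ y + v :=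
  le_trans (add_le_left h2 x) (add_le_right h1 v)

private lemma le_add_right0 {v : A} (hv : 0 ≤ v) (x : A) : x ≤ x + v := by
  have := add_le_left hv x; simpa using this

private lemma le_add_left0 {v : A} (hv : 0 ≤ v) (x : A) : x ≤ v + x := by
  rw [add_comm]; exact le_add_right0 hv x

private lemma sub_rep {x y : A} (h : x ≤ y) : y ⋆ x + x = y := by
  have hc := amul_core y x
  rwa [inf_eq_right.2 h, sup_eq_left.2 h] at hc

private lemma d_zero {x : A} (h : 0 ≤ x) : x ⋆ 0 = x := by
  have := sub_rep h; simpa using this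

private lemma chain_add {x y z : A} (hxy : x ≤ y) (hyz : y ≤ z) :
    x ⋆ y + y ⋆ z = x ⋆ z := by
  have hxz := hxy.trans hyz
  have hu : y ⋆ x ≤ z ⋆ x := by
    have h := inf_contract y x z
    rw [inf_eq_right.2 hxy, inf_eq_left.2 hyz] at h
    rw [amul_comm x y, amul_comm x z] at h; exact h
  have hy : y ⋆ x + x = y := sub_rep hxy
  have hz : z ⋆ x + x = z := sub_rep hxz
  have hw : (z ⋆ x) ⋆ (y ⋆ x) + y ⋆ x = z ⋆ x := sub_rep hu
  have hz2 : ((z ⋆ x) ⋆ (y ⋆ x)) + y = z := by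
    have h5 : ((z ⋆ x) ⋆ (y ⋆ x)) + (y ⋆ x + x) = z := by rw [← add_assoc, hw, hz]
    rwa [hy] at h5
  have hkey : y ⋆ z ≤ (z ⋆ x) ⋆ (y ⋆ x) := by
    have h := add_contract y 0 ((z ⋆ x) ⋆ (y ⋆ x))
    rw [add_zero, add_comm y ((z ⋆ x) ⋆ (y ⋆ x)), hz2] at h
    rw [amul_comm 0 ((z ⋆ x) ⋆ (y ⋆ x)), d_zero (amul_nonneg _ _)] at h
    exact h
  refine le_antisymm ?_ (amul_triangle x z y)
  calc x ⋆ y + y ⋆ z ≤ x ⋆ y + (z ⋆ x) ⋆ (y ⋆ x) := add_le_left hkey _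
    _ = (z ⋆ x) ⋆ (y ⋆ x) + y ⋆ x := by rw [amul_comm x y, add_comm]
    _ = z ⋆ x := hw
    _ = x ⋆ z := amul_comm _ _

private lemma leg (x y : A) : (x ⊔ y) ⋆ y = x ⋆ (x ⊓ y) := by
  refine le_antisymm ?_ ?_
  · have h := sup_contract y x (x ⊓ y)
    rwa [sup_comm y x, (sup_eq_left.2 inf_le_right : y ⊔ (x ⊓ y) = y)] at h
  · have h := inf_contract x (x ⊔ y) y
    rwa [(inf_eq_left.2 le_sup_left : x ⊓ (x ⊔ y) = x)] at h

private lemma legs_disj (x y : A) : (x ⋆ (x ⊓ y)) ⊓ (y ⋆ (x ⊓ y)) = 0 := by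
  have h := inf_amul_sup x y
  have e1 : x ⋆ (x ⊔ y) = y ⋆ (x ⊓ y) := by
    rw [amul_comm x (x ⊔ y), sup_comm x y, leg y x, inf_comm y x]
  have e2 : y ⋆ (x ⊔ y) = x ⋆ (x ⊓ y) := by
    rw [amul_comm y (x ⊔ y), leg x y]
  rw [e1, e2] at h
  rwa [inf_comm] at h

private lemma disj_add {u v : A} (hu : 0 ≤ u) (huv : u ⊓ v = 0) : u + v = u ⊔ v := by
  have h := amul_core u v
  rwa [huv, d_zero hu] at h

private lemma pair_id (x y : A) : x ⋆ y = (x ⊓ y) ⋆ (x ⊔ y) := by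
  have hu : x ⋆ (x ⊓ y) ≤ x ⋆ y := by
    have h := inf_contract x x y
    rwa [inf_idem] at h
  have hv : y ⋆ (x ⊓ y) ≤ x ⋆ y := by
    have h := inf_contract y x y
    rw [inf_comm y x, inf_idem] at h
    rwa [amul_comm y (x ⊓ y)]
  have hsum : x ⋆ y = x ⋆ (x ⊓ y) + y ⋆ (x ⊓ y) := by
    refine le_antisymm ?_ ?_
    · have h := amul_triangle x y (x ⊓ y)
      rwa [amul_comm (x ⊓ y) y] at h
    · rw [disj_add (amul_nonneg _ _) (legs_disj x y)]
      exact sup_le hu hv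
  have hchain : (x ⊓ y) ⋆ x + x ⋆ (x ⊔ y) = (x ⊓ y) ⋆ (x ⊔ y) :=
    chain_add inf_le_left le_sup_left
  rw [hsum, ← hchain]
  congr 1
  · exact amul_comm _ _
  · calc y ⋆ (x ⊓ y) = y ⋆ (y ⊓ x) := by rw [inf_comm y x]
      _ = (y ⊔ x) ⋆ x := (leg y x).symm
      _ = (x ⊔ y) ⋆ x := by rw [sup_comm y x]
      _ = x ⋆ (x ⊔ y) := amul_comm _ _

private lemma absorb_le {x y s : A} (hxy : x ≤ y) (h : y ≤ x + s) (hs : 0 ≤ s) :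
    y ⋆ x ≤ s := by
  have h1 : x ⋆ y + y ⋆ (x + s) = x ⋆ (x + s) := chain_add hxy h
  have h2 : x ⋆ (x + s) ≤ s := by
    have h3 := add_contract x 0 s
    rwa [add_zero, amul_comm 0 s, d_zero hs] at h3
  calc y ⋆ x = x ⋆ y := amul_comm _ _
    _ ≤ x ⋆ y + y ⋆ (x + s) := le_add_right0 (amul_nonneg _ _) _
    _ = x ⋆ (x + s) := h1
    _ ≤ s := h2

private lemma absorb_of_disj {D u v : A} (hv : 0 ≤ v) (hu : 0 ≤ u)
    (huv : u ⊓ v = 0) (h : D + v ≤ D + u) : D + v = D := by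
  have hDle : D ≤ D + v := le_add_right0 hv D
  have k1 : (D + v) ⋆ D ≤ v := by
    have h3 := add_contract D v 0
    rwa [add_zero, d_zero hv] at h3
  have k2 : (D + v) ⋆ D ≤ u := absorb_le hDle h hu
  have k0 : (D + v) ⋆ D = 0 :=
    le_antisymm ((le_inf k2 k1).trans huv.le) (amul_nonneg _ _)
  exact (amul_eq_zero_iff _ _).1 k0

private lemma sup_distrib (hdistrib : ∀ x y z : A, x ⊓ (y ⊔ z) = (x ⊓ y) ⊔ (x ⊓ z))
    (x y z : A) : x ⊔ (y ⊓ z) = (x ⊔ y) ⊓ (x ⊔ z) := by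
  rw [hdistrib (x ⊔ y) x z, (inf_eq_right.2 le_sup_left : (x ⊔ y) ⊓ x = x)]
  rw [inf_comm (x ⊔ y) z, hdistrib z x y]
  rw [← sup_assoc, (sup_eq_left.2 inf_le_right : x ⊔ (z ⊓ x) = x), inf_comm z y]

private lemma L_to_M (hdistrib : ∀ x y z : A, x ⊓ (y ⊔ z) = (x ⊓ y) ⊔ (x ⊓ z))
    {a b c : A} (h1 : a ⊓ c ≤ b) (h2 : b ≤ a ⊔ c) :
    a ⋆ b + b ⋆ c = a ⋆ c := by
  have hpq_sup : (a ⊓ b) ⊔ (b ⊓ c) = b := by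
    rw [inf_comm a b, ← hdistrib b a c]
    exact inf_eq_left.2 h2
  have hpq_inf : (a ⊓ b) ⊓ (b ⊓ c) = a ⊓ c :=
    le_antisymm
      (le_inf (inf_le_left.trans inf_le_left) (inf_le_right.trans inf_le_right))
      (le_inf (le_inf inf_le_left h1) (le_inf h1 inf_le_right))
  have hPQ_inf : (a ⊔ b) ⊓ (b ⊔ c) = b := by
    rw [sup_comm a b, ← sup_distrib hdistrib b a c]
    exact sup_eq_left.2 h1
  have hPQ_sup : (a ⊔ b) ⊔ (b ⊔ c) = a ⊔ c :=
    le_antisymm (sup_le (sup_le le_sup_left h2) (sup_le h2 le_sup_right))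
      (sup_le (le_sup_left.trans le_sup_left) (le_sup_right.trans le_sup_right))
  have hmq : a ⊓ c ≤ b ⊓ c := le_inf h1 inf_le_right
  have hQj : b ⊔ c ≤ a ⊔ c := sup_le h2 le_sup_right
  have e1 : a ⋆ b = (a ⊓ b) ⋆ b + b ⋆ (a ⊔ b) := by
    rw [pair_id a b]; exact (chain_add inf_le_right le_sup_right).symm
  have e2 : b ⋆ c = (b ⊓ c) ⋆ b + b ⋆ (b ⊔ c) := by
    rw [pair_id b c]; exact (chain_add inf_le_left le_sup_left).symm
  have e3 : a ⋆ c = ((a ⊓ c) ⋆ (b ⊓ c) + (b ⊓ c) ⋆ b) + (b ⋆ (b ⊔ c) + (b ⊔ c) ⋆ (a ⊔ c)) := by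
    calc a ⋆ c = (a ⊓ c) ⋆ (a ⊔ c) := pair_id a c
      _ = (a ⊓ c) ⋆ b + b ⋆ (a ⊔ c) := (chain_add h1 h2).symm
      _ = ((a ⊓ c) ⋆ (b ⊓ c) + (b ⊓ c) ⋆ b) + (b ⋆ (b ⊔ c) + (b ⊔ c) ⋆ (a ⊔ c)) := by
        rw [chain_add hmq inf_le_left, chain_add le_sup_left hQj]
  have R1 : (a ⊓ b) ⋆ b = (a ⊓ c) ⋆ (b ⊓ c) := by
    have h := leg (b ⊓ c) (a ⊓ b)
    rw [sup_comm (b ⊓ c) (a ⊓ b), hpq_sup, inf_comm (b ⊓ c) (a ⊓ b), hpq_inf] at h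
    rw [amul_comm (a ⊓ b) b, h, amul_comm (b ⊓ c) (a ⊓ c)]
  have Ra : b ⋆ (a ⊔ b) = (b ⊔ c) ⋆ (a ⊔ c) := by
    have h := leg (a ⊔ b) (b ⊔ c)
    rw [hPQ_sup, hPQ_inf] at h
    rw [amul_comm b (a ⊔ b), ← h, amul_comm (a ⊔ c) (b ⊔ c)]
  rw [e1, e2, e3, R1, Ra]
  abel

private lemma M_to_L_aux {a b c : A} (H : a ⋆ b + b ⋆ c = a ⋆ c) :
    b ≤ a ⊔ c ∧ (a ⊔ c) ⋆ (a ⊓ b ⊓ c) = a ⋆ c ∧ (a ⊔ c) ⋆ (a ⊓ c) = a ⋆ c ∧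
      (a ⊓ c) ⋆ (a ⊓ b ⊓ c) + a ⋆ c = a ⋆ c := by
  have hwab : a ⊓ b ⊓ c ≤ a ⊓ b := inf_le_left
  have hwbc : a ⊓ b ⊓ c ≤ b ⊓ c := le_inf (inf_le_left.trans inf_le_right) inf_le_right
  have hwm : a ⊓ b ⊓ c ≤ a ⊓ c := le_inf (inf_le_left.trans inf_le_left) inf_le_right
  have hmj : a ⊓ c ≤ a ⊔ c := inf_le_left.trans le_sup_left
  have hwj : a ⊓ b ⊓ c ≤ a ⊔ c := hwm.trans hmj
  have c1 : a ⋆ (a ⊓ b) ≤ a ⋆ b := by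
    have h := inf_contract a a b; rwa [inf_idem] at h
  have c2 : b ⋆ (a ⊓ b) ≤ a ⋆ b := by
    have h := inf_contract b b a
    rw [inf_idem, inf_comm b a] at h
    rwa [amul_comm b a] at h
  have c3 : c ⋆ (b ⊓ c) ≤ b ⋆ c := by
    have h := inf_contract c b c
    rw [inf_comm c b, inf_idem] at h
    rwa [amul_comm c (b ⊓ c)]
  have c4 : (a ⊓ b) ⋆ (a ⊓ b ⊓ c) ≤ b ⋆ c := by
    have h := inf_contract (a ⊓ b) b c
    rwa [inf_eq_left.2 (inf_le_right : a ⊓ b ≤ b)] at h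
  have hba : (b ⊓ c) ⊓ a = a ⊓ b ⊓ c :=
    le_antisymm
      (le_inf (le_inf inf_le_right (inf_le_left.trans inf_le_left))
        (inf_le_left.trans inf_le_right))
      (le_inf (le_inf (inf_le_left.trans inf_le_right) inf_le_right)
        (inf_le_left.trans inf_le_left))
  have c5 : (b ⊓ c) ⋆ (a ⊓ b ⊓ c) ≤ a ⋆ b := by
    have h := inf_contract (b ⊓ c) b a
    rw [inf_eq_left.2 (inf_le_left : b ⊓ c ≤ b), hba, amul_comm b a] at h
    exact h
  have rb : b = b ⋆ (a ⊓ b) + ((a ⊓ b) ⋆ (a ⊓ b ⊓ c) + (a ⊓ b ⊓ c)) := by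
    rw [sub_rep hwab, sub_rep (inf_le_right : a ⊓ b ≤ b)]
  have ra : a = a ⋆ (a ⊓ b) + ((a ⊓ b) ⋆ (a ⊓ b ⊓ c) + (a ⊓ b ⊓ c)) := by
    rw [sub_rep hwab, sub_rep (inf_le_left : a ⊓ b ≤ a)]
  have rc : c = c ⋆ (b ⊓ c) + ((b ⊓ c) ⋆ (a ⊓ b ⊓ c) + (a ⊓ b ⊓ c)) := by
    rw [sub_rep hwbc, sub_rep (inf_le_right : b ⊓ c ≤ c)]
  have hb_le : b ≤ a ⋆ c + (a ⊓ b ⊓ c) := by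
    calc b = b ⋆ (a ⊓ b) + ((a ⊓ b) ⋆ (a ⊓ b ⊓ c) + (a ⊓ b ⊓ c)) := rb
      _ ≤ a ⋆ b + (b ⋆ c + (a ⊓ b ⊓ c)) := add_le_add4 c2 (add_le_right c4 _)
      _ = (a ⋆ b + b ⋆ c) + (a ⊓ b ⊓ c) := (add_assoc _ _ _).symm
      _ = a ⋆ c + (a ⊓ b ⊓ c) := by rw [H]
  have ha_le : a ≤ a ⋆ c + (a ⊓ b ⊓ c) := by
    calc a = a ⋆ (a ⊓ b) + ((a ⊓ b) ⋆ (a ⊓ b ⊓ c) + (a ⊓ b ⊓ c)) := ra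
      _ ≤ a ⋆ b + (b ⋆ c + (a ⊓ b ⊓ c)) := add_le_add4 c1 (add_le_right c4 _)
      _ = (a ⋆ b + b ⋆ c) + (a ⊓ b ⊓ c) := (add_assoc _ _ _).symm
      _ = a ⋆ c + (a ⊓ b ⊓ c) := by rw [H]
  have hc_le : c ≤ a ⋆ c + (a ⊓ b ⊓ c) := by
    calc c = c ⋆ (b ⊓ c) + ((b ⊓ c) ⋆ (a ⊓ b ⊓ c) + (a ⊓ b ⊓ c)) := rc
      _ ≤ b ⋆ c + (a ⋆ b + (a ⊓ b ⊓ c)) := add_le_add4 c3 (add_le_right c5 _)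
      _ = (a ⋆ b + b ⋆ c) + (a ⊓ b ⊓ c) := by
        rw [← add_assoc, add_comm (b ⋆ c) (a ⋆ b)]
      _ = a ⋆ c + (a ⊓ b ⊓ c) := by rw [H]
  have hj_le : a ⊔ c ≤ a ⋆ c + (a ⊓ b ⊓ c) := sup_le ha_le hc_le
  have k1 : (a ⊔ c) ⋆ (a ⊓ c) = a ⋆ c := by
    rw [amul_comm (a ⊔ c) (a ⊓ c)]; exact (pair_id a c).symm
  have hj_rep : a ⊔ c = a ⋆ c + (a ⊓ c) := by
    have h := sub_rep hmj
    rw [k1] at h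
    exact h.symm
  have hbj : b ≤ a ⊔ c := hb_le.trans (by rw [hj_rep]; exact add_le_left hwm _)
  have S3 : (a ⊔ c) ⋆ (a ⊓ b ⊓ c) ≤ a ⋆ c :=
    absorb_le hwj (by rw [add_comm] at hj_le; exact hj_le) (amul_nonneg a c)
  have hchain : (a ⊓ b ⊓ c) ⋆ (a ⊓ c) + (a ⊓ c) ⋆ (a ⊔ c) = (a ⊓ b ⊓ c) ⋆ (a ⊔ c) :=
    chain_add hwm hmj
  have E1 : (a ⊓ c) ⋆ (a ⊓ b ⊓ c) + a ⋆ c = a ⋆ c := by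
    refine le_antisymm ?_ (le_add_left0 (amul_nonneg _ _) _)
    have h2' : (a ⊓ b ⊓ c) ⋆ (a ⊔ c) ≤ a ⋆ c := by
      rw [amul_comm]; exact S3
    calc (a ⊓ c) ⋆ (a ⊓ b ⊓ c) + a ⋆ c
        = (a ⊓ b ⊓ c) ⋆ (a ⊓ c) + (a ⊓ c) ⋆ (a ⊔ c) := by
          rw [amul_comm (a ⊓ c) (a ⊓ b ⊓ c), ← k1, amul_comm (a ⊔ c) (a ⊓ c)]
      _ = (a ⊓ b ⊓ c) ⋆ (a ⊔ c) := hchain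
      _ ≤ a ⋆ c := h2'
  have t1 : (a ⊓ c) ⋆ (a ⊔ c) = a ⋆ c := by
    rw [amul_comm]; exact k1
  have k0 : (a ⊔ c) ⋆ (a ⊓ b ⊓ c) = a ⋆ c := by
    calc (a ⊔ c) ⋆ (a ⊓ b ⊓ c) = (a ⊓ b ⊓ c) ⋆ (a ⊔ c) := amul_comm _ _
      _ = (a ⊓ b ⊓ c) ⋆ (a ⊓ c) + (a ⊓ c) ⋆ (a ⊔ c) := hchain.symm
      _ = (a ⊓ c) ⋆ (a ⊓ b ⊓ c) + a ⋆ c := by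
          rw [amul_comm (a ⊓ b ⊓ c) (a ⊓ c), t1]
      _ = a ⋆ c := E1
  exact ⟨hbj, k0, k1, E1⟩

end ALM

theorem stmt15 {A : Type*} [ALMonoid A]
    (hdistrib : ∀ x y z : A, x ⊓ (y ⊔ z) = (x ⊓ y) ⊔ (x ⊓ z))
    (hdisj : ∀ x u v : A, x ⊓ u = 0 → x ⊓ v = 0 → x ⊓ (u + v) = 0) :
    List.TFAE [
      ∀ a b c : A, (a ⊓ c ≤ b ∧ b ≤ a ⊔ c) ↔ a ⋆ b + b ⋆ c = a ⋆ c,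
      ∀ a b c d : A, a ⋆ b + b ⋆ c = a ⋆ c → a ⋆ d + d ⋆ b = a ⋆ b →
        d ⋆ b + b ⋆ c = d ⋆ c,
      ∀ a b c : A, b ⊔ c ≤ a → a ⋆ c ≤ a ⋆ b → b ≤ c,
      ∀ a b c : A, a ⋆ b + b ⋆ c = a ⋆ c → a ⋆ c + c ⋆ b = a ⋆ b → b = c] := by
  tfae_have 1 → 2 := by
    intro h1 a b c d habc hadb
    obtain ⟨hl1, hl2⟩ := (h1 a b c).mpr habc
    obtain ⟨hl3, hl4⟩ := (h1 a d b).mpr hadb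
    apply (h1 d b c).mp
    constructor
    · calc d ⊓ c ≤ (a ⊔ b) ⊓ c := inf_le_inf_right c hl4
        _ = (c ⊓ a) ⊔ (c ⊓ b) := by rw [inf_comm (a ⊔ b) c]; exact hdistrib c a b
        _ ≤ b := sup_le (by rw [inf_comm c a]; exact hl1) inf_le_right
    · calc b = b ⊓ (a ⊔ c) := (inf_eq_left.2 hl2).symm
        _ = (b ⊓ a) ⊔ (b ⊓ c) := hdistrib b a c
        _ ≤ d ⊔ c := sup_le ((by rw [inf_comm b a]; exact hl3 : b ⊓ a ≤ d).trans le_sup_left)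
            (inf_le_right.trans le_sup_right)
  tfae_have 2 → 4 := by
    intro h2 a b c habc hacb
    have h3 := h2 a c b b hacb habc
    rw [amul_self b] at h3
    have hb : b ⋆ c = 0 := by
      refine le_antisymm ?_ (amul_nonneg _ _)
      calc b ⋆ c ≤ b ⋆ c + c ⋆ b := le_add_right0 (amul_nonneg _ _) _
        _ = 0 := h3
    exact (amul_eq_zero_iff b c).1 hb
  tfae_have 4 → 1 := by
    intro h4 a b c
    constructor
    · rintro ⟨hl1, hl2⟩; exact L_to_M hdistrib hl1 hl2
    · intro H
      obtain ⟨hbj, k0, k1, E1⟩ := M_to_L_aux H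
      refine ⟨?_, hbj⟩
      have key1 : (a ⊔ c) ⋆ (a ⊓ c) + (a ⊓ c) ⋆ (a ⊓ b ⊓ c) = (a ⊔ c) ⋆ (a ⊓ b ⊓ c) := by
        rw [k0, k1, add_comm]; exact E1
      have key2 : (a ⊔ c) ⋆ (a ⊓ b ⊓ c) + (a ⊓ b ⊓ c) ⋆ (a ⊓ c) = (a ⊔ c) ⋆ (a ⊓ c) := by
        rw [k0, k1, amul_comm (a ⊓ b ⊓ c) (a ⊓ c), add_comm]; exact E1
      have hmw := h4 (a ⊔ c) (a ⊓ c) (a ⊓ b ⊓ c) key1 key2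
      exact hmw.trans_le (inf_le_left.trans inf_le_right)
  tfae_have 4 → 3 := by
    intro h4 a b c hsup hdd
    have hba : b ≤ a := le_sup_left.trans hsup
    have hca : c ≤ a := le_sup_right.trans hsup
    have du : b ⋆ (b ⊔ c) + (b ⊔ c) ⋆ a = b ⋆ a := chain_add le_sup_left hsup
    have dv : c ⋆ (b ⊔ c) + (b ⊔ c) ⋆ a = c ⋆ a := chain_add le_sup_right hsup
    have disj : (b ⋆ (b ⊔ c)) ⊓ (c ⋆ (b ⊔ c)) = 0 := inf_amul_sup b c
    have hvD : (b ⊔ c) ⋆ a + c ⋆ (b ⊔ c) ≤ (b ⊔ c) ⋆ a + b ⋆ (b ⊔ c) := by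
      rw [add_comm ((b ⊔ c) ⋆ a) (c ⋆ (b ⊔ c)), dv,
        add_comm ((b ⊔ c) ⋆ a) (b ⋆ (b ⊔ c)), du, amul_comm c a, amul_comm b a]
      exact hdd
    have habs : (b ⊔ c) ⋆ a + c ⋆ (b ⊔ c) = (b ⊔ c) ⋆ a :=
      absorb_of_disj (amul_nonneg _ _) (amul_nonneg _ _) disj hvD
    have hac : a ⋆ c = (b ⊔ c) ⋆ a := by
      calc a ⋆ c = c ⋆ a := amul_comm a c
        _ = c ⋆ (b ⊔ c) + (b ⊔ c) ⋆ a := dv.symm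
        _ = (b ⊔ c) ⋆ a + c ⋆ (b ⊔ c) := add_comm _ _
        _ = (b ⊔ c) ⋆ a := habs
    have hleg : (b ⊔ c) ⋆ b = c ⋆ (b ⊓ c) := by
      have h := leg c b
      rw [sup_comm c b, inf_comm c b] at h
      exact h
    have ch1 : (b ⊓ c) ⋆ c + c ⋆ a = (b ⊓ c) ⋆ a := chain_add inf_le_right hca
    have ch2 : (b ⊓ c) ⋆ b + b ⋆ a = (b ⊓ c) ⋆ a := chain_add inf_le_left hba
    have hfix : (b ⊓ c) ⋆ a = b ⋆ a := by
      calc (b ⊓ c) ⋆ a = (b ⊓ c) ⋆ c + c ⋆ a := ch1.symm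
        _ = c ⋆ (b ⊓ c) + c ⋆ a := by rw [amul_comm (b ⊓ c) c]
        _ = (b ⊔ c) ⋆ b + c ⋆ a := by rw [← hleg]
        _ = b ⋆ (b ⊔ c) + c ⋆ a := by rw [amul_comm (b ⊔ c) b]
        _ = b ⋆ (b ⊔ c) + (b ⊔ c) ⋆ a := by rw [amul_comm c a, hac]
        _ = b ⋆ a := du
    have t1 : a ⋆ b + b ⋆ (b ⊓ c) = a ⋆ (b ⊓ c) := by
      calc a ⋆ b + b ⋆ (b ⊓ c) = (b ⊓ c) ⋆ b + b ⋆ a := by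
            rw [amul_comm a b, amul_comm b (b ⊓ c), add_comm]
        _ = (b ⊓ c) ⋆ a := ch2
        _ = a ⋆ (b ⊓ c) := amul_comm _ _
    have abs3 : (b ⊓ c) ⋆ b + b ⋆ a = b ⋆ a := by rw [ch2, hfix]
    have t2 : a ⋆ (b ⊓ c) + (b ⊓ c) ⋆ b = a ⋆ b := by
      calc a ⋆ (b ⊓ c) + (b ⊓ c) ⋆ b = (b ⊓ c) ⋆ a + (b ⊓ c) ⋆ b := by
            rw [amul_comm a (b ⊓ c)]
        _ = b ⋆ a + (b ⊓ c) ⋆ b := by rw [hfix]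
        _ = (b ⊓ c) ⋆ b + b ⋆ a := add_comm _ _
        _ = b ⋆ a := abs3
        _ = a ⋆ b := amul_comm _ _
    have hbc := h4 a b (b ⊓ c) t1 t2
    exact hbc.trans_le inf_le_right
  tfae_have 3 → 1 := by
    intro h3 a b c
    constructor
    · rintro ⟨hl1, hl2⟩; exact L_to_M hdistrib hl1 hl2
    · intro H
      obtain ⟨hbj, k0, k1, E1⟩ := M_to_L_aux H
      refine ⟨?_, hbj⟩
      have hwm : a ⊓ b ⊓ c ≤ a ⊓ c := le_inf (inf_le_left.trans inf_le_left) inf_le_right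
      have hmw := h3 (a ⊔ c) (a ⊓ c) (a ⊓ b ⊓ c)
        (by rw [sup_eq_left.2 hwm]; exact inf_le_left.trans le_sup_left)
        (le_of_eq (k0.trans k1.symm))
      exact hmw.trans (inf_le_left.trans inf_le_right)
  tfae_finish
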